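/- Zaharjuta's counterexample: let K = { (z₁, 0) ∈ ℂ² : |z₁| ≤ 1 }. Then τ_{K,(n,0)} = 1 for all n ≥ 1, while τ_{K,(n,1)} = 0 for all n ≥ 0. Consequently, the limit lim_{α/|α| → (1,0)} τ_{K,α} does not exist: the limsup over sequences α(j)/|α(j)| → (1,0) equals 1 while the liminf equals 0. -/
import Mathlib


open MvPolynomial Filter

/-- Total degree (length) of a multi-index. -/
def degF {d : ℕ} (α : Fin d →₀ ℕ) : ℕ := α.sum fun _ n => n

/-- Sup norm of a polynomial on a set. -/
noncomputable def supNorm {d : ℕ} (K : Set (Fin d → ℂ)) (p : MvPolynomial (Fin d) ℂ) : ℝ :=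
  sSup ((fun z => ‖MvPolynomial.eval z p‖) '' K)

/-- The monic class `M_α` with respect to a strict order `prec` on multi-indices. -/
def MonicClass {d : ℕ} (prec : (Fin d →₀ ℕ) → (Fin d →₀ ℕ) → Prop)
    (α : Fin d →₀ ℕ) (p : MvPolynomial (Fin d) ℂ) : Prop :=
  MvPolynomial.coeff α p = 1 ∧ ∀ β ∈ p.support, β ≠ α → prec β α

/-- The directional Chebyshev constant `τ_{K,α}`. -/
noncomputable def tau {d : ℕ} (K : Set (Fin d → ℂ))
    (prec : (Fin d →₀ ℕ) → (Fin d →₀ ℕ) → Prop) (α : Fin d →₀ ℕ) : ℝ :=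
  sInf ((fun p => supNorm K p ^ ((degF α : ℝ)⁻¹)) '' {p | MonicClass prec α p})

/-- Graded lexicographic-type order with `z₁ ≺ z₂ ≺ ⋯ ≺ z_d`:
`β ≺ α` iff `|β| < |α|`, or the degrees agree and at the first index where they
differ `β` has the *larger* exponent (so `z₁^n` is smallest in its degree class). -/
def gLex {d : ℕ} (β α : Fin d →₀ ℕ) : Prop :=
  degF β < degF α ∨ (degF β = degF α ∧ Finsupp.Lex (· < ·) (· < ·) α β)

/-- The filter of multi-indices `α ∈ ℕ²` with `|α| → ∞` and `α/|α| → θ`. -/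
noncomputable def dirFilterF (θ : Fin 2 → ℝ) : Filter (Fin 2 →₀ ℕ) :=
  (atTop.comap degF) ⊓
    ((nhds θ).comap fun (α : Fin 2 →₀ ℕ) (i : Fin 2) => (α i : ℝ) / (degF α : ℝ))

-- basic facts
def Kz : Set (Fin 2 → ℂ) := {z : Fin 2 → ℂ | ‖z 0‖ ≤ 1 ∧ z 1 = 0}

def ptz (w : ℂ) : Fin 2 → ℂ := fun i => if i = 0 then w else 0

lemma ptz_mem {w : ℂ} (hw : ‖w‖ ≤ 1) : ptz w ∈ Kz := by
  constructor
  · simpa [ptz] using hw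
  · simp [ptz]

lemma degF_two (β : Fin 2 →₀ ℕ) : degF β = β 0 + β 1 := by
  rw [degF, Finsupp.sum_fintype _ _ (fun _ => rfl), Fin.sum_univ_two]

lemma degF_single (i : Fin 2) (n : ℕ) : degF (Finsupp.single i n) = n := by
  rw [degF, Finsupp.sum_single_index]; rfl

lemma supNorm_bddAbove (p : MvPolynomial (Fin 2) ℂ) :
    BddAbove ((fun z => ‖MvPolynomial.eval z p‖) '' Kz) := by
  refine ⟨∑ β ∈ p.support, ‖coeff β p‖, ?_⟩
  rintro x ⟨z, ⟨hz0, hz1⟩, rfl⟩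
  calc ‖MvPolynomial.eval z p‖
      = ‖∑ β ∈ p.support, coeff β p * ∏ i, z i ^ β i‖ := by rw [eval_eq']
    _ ≤ ∑ β ∈ p.support, ‖coeff β p * ∏ i, z i ^ β i‖ := norm_sum_le _ _
    _ ≤ ∑ β ∈ p.support, ‖coeff β p‖ := by
        refine Finset.sum_le_sum fun β _ => ?_
        rw [norm_mul]
        refine mul_le_of_le_one_right (norm_nonneg _) ?_
        rw [norm_prod]
        refine Finset.prod_le_one (fun i _ => norm_nonneg _) fun i _ => ?_
        rw [norm_pow]
        refine pow_le_one₀ (norm_nonneg _) ?_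
        fin_cases i
        · exact hz0
        · simp [hz1]

lemma eval_le_supNorm (p : MvPolynomial (Fin 2) ℂ) {z : Fin 2 → ℂ} (hz : z ∈ Kz) :
    ‖MvPolynomial.eval z p‖ ≤ supNorm Kz p :=
  le_csSup (supNorm_bddAbove p) ⟨z, hz, rfl⟩

lemma supNorm_nonneg (p : MvPolynomial (Fin 2) ℂ) : 0 ≤ supNorm Kz p :=
  le_trans (norm_nonneg _) (eval_le_supNorm p (ptz_mem (w := 1) (by norm_num)))

lemma eval_ptz (p : MvPolynomial (Fin 2) ℂ) (w : ℂ) :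
    MvPolynomial.eval (ptz w) p
      = ∑ β ∈ p.support, coeff β p * (w ^ β 0 * (if β 1 = 0 then 1 else 0)) := by
  rw [eval_eq']
  refine Finset.sum_congr rfl fun β _ => ?_
  congr 1
  rw [Fin.prod_univ_two]
  simp [ptz, zero_pow_eq]

lemma support_shape {n : ℕ} {β : Fin 2 →₀ ℕ} (h : gLex β (Finsupp.single 0 n)) :
    degF β < n := by
  rcases h with h | ⟨hdeg, hlex⟩
  · rwa [degF_single] at h
  · exfalso
    rw [degF_single] at hdeg
    obtain ⟨i, hji, hi⟩ := hlex
    have hcase : i = 0 ∨ i = 1 := by fin_cases i <;> simp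
    rcases hcase with rfl | rfl
    · simp only [Finsupp.single_eq_same] at hi
      have : β 0 ≤ n := by rw [← hdeg, degF_two]; omega
      omega
    · have h0 : (Finsupp.single 0 n : Fin 2 →₀ ℕ) 0 = β 0 := hji 0 (by norm_num)
      rw [Finsupp.single_eq_same] at h0
      have hb1 : β 1 = 0 := by rw [degF_two, ← h0] at hdeg; omega
      have h1 : (Finsupp.single 0 n : Fin 2 →₀ ℕ) 1 = 0 := by
        rw [Finsupp.single_apply]; norm_num
      rw [h1, hb1] at hi
      exact lt_irrefl 0 hi

lemma one_le_supNorm {n : ℕ} (hn : 1 ≤ n) {p : MvPolynomial (Fin 2) ℂ}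
    (hp : MonicClass gLex (Finsupp.single 0 n) p) : 1 ≤ supNorm Kz p := by
  classical
  set N := n + 1 with hN
  set ζ : ℂ := Complex.exp (2 * Real.pi * Complex.I / N) with hζdef
  have hprim : IsPrimitiveRoot ζ N := Complex.isPrimitiveRoot_exp N (by omega)
  have hζnorm : ‖ζ‖ = 1 := Complex.norm_eq_one_of_pow_eq_one hprim.pow_eq_one (by omega)
  -- the key sum identity
  have hsum : ∑ j ∈ Finset.range N, ζ ^ j * MvPolynomial.eval (ptz (ζ ^ j)) p = (N : ℂ) := by
    have hswap : ∑ j ∈ Finset.range N, ζ ^ j * MvPolynomial.eval (ptz (ζ ^ j)) p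
        = ∑ β ∈ p.support, coeff β p * (if β 1 = 0 then 1 else 0) *
            ∑ j ∈ Finset.range N, (ζ ^ (β 0 + 1)) ^ j := by
      simp_rw [eval_ptz, Finset.mul_sum]
      rw [Finset.sum_comm]
      refine Finset.sum_congr rfl fun β _ => ?_
      refine Finset.sum_congr rfl fun j _ => ?_
      have hpow : (ζ ^ (β 0 + 1)) ^ j = ζ ^ j * (ζ ^ j) ^ (β 0) := by
        rw [← pow_mul, ← pow_mul, ← pow_add]
        congr 1
        ring
      rw [hpow]
      ring
    rw [hswap]
    rw [Finset.sum_eq_single (Finsupp.single 0 n)]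
    · have hα0 : (Finsupp.single 0 n : Fin 2 →₀ ℕ) 0 = n := Finsupp.single_eq_same
      have hα1 : (Finsupp.single 0 n : Fin 2 →₀ ℕ) 1 = 0 := by
        rw [Finsupp.single_apply]; norm_num
      rw [hp.1, hα0, hα1, if_pos rfl, hprim.pow_eq_one]
      simp
    · intro β hβ hne
      have hdeg : degF β < n := support_shape (hp.2 β hβ hne)
      by_cases h1 : β 1 = 0
      · have hb0 : β 0 < n := by rw [degF_two, h1] at hdeg; omega
        have hne1 : ζ ^ (β 0 + 1) ≠ 1 :=
          hprim.pow_ne_one_of_pos_of_lt (by omega) (by omega)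
        rw [geom_sum_eq hne1, ← pow_mul, mul_comm (β 0 + 1) N, pow_mul,
          hprim.pow_eq_one, one_pow, sub_self, zero_div, mul_zero]
      · rw [if_neg h1, mul_zero, zero_mul]
    · intro h
      exact absurd (by rw [MvPolynomial.mem_support_iff, hp.1]; exact one_ne_zero) h
  -- conclude
  have hbound : (N : ℝ) ≤ (N : ℝ) * supNorm Kz p := by
    calc (N : ℝ) = ‖(N : ℂ)‖ := by simp
      _ = ‖∑ j ∈ Finset.range N, ζ ^ j * MvPolynomial.eval (ptz (ζ ^ j)) p‖ := by rw [hsum]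
      _ ≤ ∑ j ∈ Finset.range N, ‖ζ ^ j * MvPolynomial.eval (ptz (ζ ^ j)) p‖ := norm_sum_le _ _
      _ ≤ ∑ _j ∈ Finset.range N, supNorm Kz p := by
          refine Finset.sum_le_sum fun j _ => ?_
          rw [norm_mul, norm_pow, hζnorm, one_pow, one_mul]
          exact eval_le_supNorm p (ptz_mem (by rw [norm_pow, hζnorm, one_pow]))
      _ = (N : ℝ) * supNorm Kz p := by rw [Finset.sum_const, Finset.card_range, nsmul_eq_mul]
  have hNpos : (0 : ℝ) < N := by positivity
  nlinarith [hbound]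

lemma monic_monomial (α : Fin 2 →₀ ℕ) :
    MonicClass gLex α (MvPolynomial.monomial α 1) := by
  constructor
  · rw [coeff_monomial, if_pos rfl]
  · intro β hβ hne
    rw [support_monomial, if_neg one_ne_zero, Finset.mem_singleton] at hβ
    exact absurd hβ hne

lemma eval_monomial_single (z : Fin 2 → ℂ) (i : Fin 2) (n : ℕ) :
    MvPolynomial.eval z (MvPolynomial.monomial (Finsupp.single i n) (1 : ℂ))
      = z i ^ n := by
  rw [eval_monomial, one_mul]
  exact Finsupp.prod_single_index (pow_zero _)

lemma supNorm_X0n (n : ℕ) :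
    supNorm Kz (MvPolynomial.monomial (Finsupp.single (0 : Fin 2) n) (1 : ℂ)) = 1 := by
  apply IsGreatest.csSup_eq
  constructor
  · refine ⟨ptz 1, ptz_mem (by norm_num), ?_⟩
    beta_reduce
    rw [eval_monomial_single]
    simp [ptz]
  · rintro x ⟨z, ⟨hz0, _⟩, rfl⟩
    beta_reduce
    rw [eval_monomial_single, norm_pow]
    exact pow_le_one₀ (norm_nonneg _) hz0

lemma tau_single (n : ℕ) (hn : 1 ≤ n) : tau Kz gLex (Finsupp.single 0 n) = 1 := by
  apply IsLeast.csInf_eq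
  constructor
  · refine ⟨MvPolynomial.monomial (Finsupp.single (0 : Fin 2) n) (1 : ℂ),
      monic_monomial _, ?_⟩
    beta_reduce
    rw [supNorm_X0n, Real.one_rpow]
  · rintro x ⟨q, hq, rfl⟩
    have h1 : (1 : ℝ) ≤ supNorm Kz q := one_le_supNorm hn hq
    have := Real.rpow_le_rpow (by norm_num) h1 (by positivity : (0:ℝ) ≤ ((degF (Finsupp.single (0:Fin 2) n) : ℝ))⁻¹)
    rwa [Real.one_rpow] at this

lemma supNorm_Xn1 (n : ℕ) :
    supNorm Kz (MvPolynomial.monomial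
      (Finsupp.single (0 : Fin 2) n + Finsupp.single 1 1) (1 : ℂ)) = 0 := by
  have heval : ∀ z ∈ Kz, MvPolynomial.eval z (MvPolynomial.monomial
      (Finsupp.single (0 : Fin 2) n + Finsupp.single 1 1) (1 : ℂ)) = 0 := by
    rintro z ⟨_, hz1⟩
    have : (MvPolynomial.monomial (Finsupp.single (0 : Fin 2) n + Finsupp.single 1 1) (1 : ℂ))
        = MvPolynomial.monomial (Finsupp.single (0 : Fin 2) n) 1 *
          MvPolynomial.monomial (Finsupp.single (1 : Fin 2) 1) 1 := by
      rw [monomial_mul, one_mul]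
    rw [this, map_mul, eval_monomial_single, eval_monomial_single, pow_one, hz1, mul_zero]
  have himg : (fun z => ‖MvPolynomial.eval z (MvPolynomial.monomial
      (Finsupp.single (0 : Fin 2) n + Finsupp.single 1 1) (1 : ℂ))‖) '' Kz = {0} := by
    apply Set.Subset.antisymm
    · rintro x ⟨z, hz, rfl⟩
      beta_reduce
      rw [heval z hz, norm_zero]
      rfl
    · rintro x rfl
      exact ⟨ptz 1, ptz_mem (by norm_num), by
        beta_reduce
        rw [heval _ (ptz_mem (by norm_num)), norm_zero]⟩
  rw [supNorm, himg, csSup_singleton]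

lemma tau_single_one (n : ℕ) :
    tau Kz gLex (Finsupp.single 0 n + Finsupp.single 1 1) = 0 := by
  have hdeg : degF (Finsupp.single (0 : Fin 2) n + Finsupp.single 1 1) = n + 1 := by
    rw [degF_two]
    simp [Finsupp.single_apply]
  apply IsLeast.csInf_eq
  constructor
  · refine ⟨MvPolynomial.monomial _ (1 : ℂ), monic_monomial _, ?_⟩
    beta_reduce
    rw [supNorm_Xn1, hdeg, Real.zero_rpow (by positivity)]
  · rintro x ⟨q, hq, rfl⟩
    exact Real.rpow_nonneg (supNorm_nonneg q) _

lemma tau_nonneg (α : Fin 2 →₀ ℕ) : 0 ≤ tau Kz gLex α := by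
  apply le_csInf (Set.Nonempty.image _ ⟨MvPolynomial.monomial α 1, Set.mem_setOf.mpr (monic_monomial α)⟩)
  rintro x ⟨q, hq, rfl⟩
  exact Real.rpow_nonneg (supNorm_nonneg q) _

lemma supNorm_monomial_le_one (α : Fin 2 →₀ ℕ) :
    supNorm Kz (MvPolynomial.monomial α (1 : ℂ)) ≤ 1 := by
  apply csSup_le (Set.Nonempty.image _ ⟨ptz 1, ptz_mem (by norm_num)⟩)
  rintro x ⟨z, ⟨hz0, hz1⟩, rfl⟩
  beta_reduce
  rw [eval_monomial, one_mul]
  rw [Finsupp.prod]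
  rw [norm_prod]
  refine Finset.prod_le_one (fun i _ => norm_nonneg _) fun i _ => ?_
  rw [norm_pow]
  refine pow_le_one₀ (norm_nonneg _) ?_
  fin_cases i
  · exact hz0
  · simp [hz1]

lemma tau_le_one (α : Fin 2 →₀ ℕ) : tau Kz gLex α ≤ 1 := by
  have hb : BddBelow ((fun p => supNorm Kz p ^ ((degF α : ℝ)⁻¹)) ''
      {p | MonicClass gLex α p}) := by
    refine ⟨0, ?_⟩
    rintro x ⟨q, hq, rfl⟩
    exact Real.rpow_nonneg (supNorm_nonneg q) _
  refine le_trans (csInf_le hb ⟨MvPolynomial.monomial α 1, monic_monomial α, rfl⟩) ?_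
  exact Real.rpow_le_one (supNorm_nonneg _) (supNorm_monomial_le_one α) (by positivity)


lemma tendsto_g1 :
    Tendsto (fun m : ℕ => (Finsupp.single 0 m : Fin 2 →₀ ℕ)) atTop
      (dirFilterF fun i => if i = 0 then 1 else 0) := by
  rw [dirFilterF, tendsto_inf]
  constructor
  · rw [tendsto_comap_iff]
    have : (degF ∘ fun m : ℕ => (Finsupp.single 0 m : Fin 2 →₀ ℕ)) = id := by
      funext m; simp [Function.comp, degF_single]
    rw [this]
    exact tendsto_id
  · rw [tendsto_comap_iff]
    refine Tendsto.congr' ?_ tendsto_const_nhds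
    filter_upwards [eventually_ge_atTop 1] with m hm
    have hm0 : (m : ℝ) ≠ 0 := Nat.cast_ne_zero.mpr (by omega)
    funext i
    simp only [Function.comp, degF_single]
    fin_cases i
    · simp [Finsupp.single_eq_same, div_self hm0]
    · simp [Finsupp.single_apply]

lemma g2_apply0 (m : ℕ) : ((Finsupp.single 0 m + Finsupp.single 1 1 : Fin 2 →₀ ℕ)) 0 = m := by
  simp [Finsupp.single_apply]

lemma g2_apply1 (m : ℕ) : ((Finsupp.single 0 m + Finsupp.single 1 1 : Fin 2 →₀ ℕ)) 1 = 1 := by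
  simp [Finsupp.single_apply]

lemma degF_g2 (m : ℕ) : degF ((Finsupp.single 0 m + Finsupp.single 1 1 : Fin 2 →₀ ℕ)) = m + 1 := by
  rw [degF_two, g2_apply0, g2_apply1]

lemma tendsto_g2 :
    Tendsto (fun m : ℕ => (Finsupp.single 0 m + Finsupp.single 1 1 : Fin 2 →₀ ℕ)) atTop
      (dirFilterF fun i => if i = 0 then 1 else 0) := by
  rw [dirFilterF, tendsto_inf]
  constructor
  · rw [tendsto_comap_iff]
    have : (degF ∘ fun m : ℕ => (Finsupp.single 0 m + Finsupp.single 1 1 : Fin 2 →₀ ℕ))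
        = fun m => m + 1 := by
      funext m; simp [Function.comp, degF_g2]
    rw [this]
    exact tendsto_add_atTop_nat 1
  · rw [tendsto_comap_iff]
    rw [tendsto_pi_nhds]
    intro i
    have hcase : i = 0 ∨ i = 1 := by fin_cases i <;> simp
    rcases hcase with rfl | rfl
    · have h0 : (if (0 : Fin 2) = 0 then (1:ℝ) else 0) = 1 := by norm_num
      rw [h0]
      refine (tendsto_natCast_div_add_atTop (𝕜 := ℝ) 1).congr fun m => ?_
      simp only [Function.comp_apply]
      rw [g2_apply0, degF_g2]
      push_cast
      ring_nf
    · have h1 : (if (1 : Fin 2) = 0 then (1:ℝ) else 0) = 0 := by norm_num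
      rw [h1]
      refine tendsto_one_div_add_atTop_nhds_zero_nat.congr fun m => ?_
      simp only [Function.comp_apply]
      rw [g2_apply1, degF_g2]
      push_cast
      ring_nf


/-- Zaharjuta's counterexample `K = {(z₁,0) : |z₁| ≤ 1} ⊆ ℂ²`:
`τ_{K,(n,0)} = 1` for `n ≥ 1` and `τ_{K,(n,1)} = 0`, so along `α/|α| → (1,0)` the
limsup of `τ_{K,α}` is `1` while the liminf is `0`: the limit does not exist. -/
theorem zaharjuta_counterexample :
    (∀ n : ℕ, 1 ≤ n →
      tau {z : Fin 2 → ℂ | ‖z 0‖ ≤ 1 ∧ z 1 = 0} gLex (Finsupp.single 0 n) = 1) ∧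
    (∀ n : ℕ,
      tau {z : Fin 2 → ℂ | ‖z 0‖ ≤ 1 ∧ z 1 = 0} gLex
        (Finsupp.single 0 n + Finsupp.single 1 1) = 0) ∧
    limsup (tau {z : Fin 2 → ℂ | ‖z 0‖ ≤ 1 ∧ z 1 = 0} gLex)
        (dirFilterF fun i => if i = 0 then 1 else 0) = 1 ∧
    liminf (tau {z : Fin 2 → ℂ | ‖z 0‖ ≤ 1 ∧ z 1 = 0} gLex)
        (dirFilterF fun i => if i = 0 then 1 else 0) = 0 := by
  have hK : {z : Fin 2 → ℂ | ‖z 0‖ ≤ 1 ∧ z 1 = 0} = Kz := rfl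
  rw [hK]
  haveI hNB : (dirFilterF fun i => if i = 0 then 1 else 0).NeBot :=
    neBot_of_le tendsto_g1
  have hub : IsBoundedUnder (· ≤ ·) (dirFilterF fun i => if i = 0 then 1 else 0)
      (tau Kz gLex) := isBoundedUnder_of ⟨1, tau_le_one⟩
  have hlb : IsBoundedUnder (· ≥ ·) (dirFilterF fun i => if i = 0 then 1 else 0)
      (tau Kz gLex) := isBoundedUnder_of ⟨0, tau_nonneg⟩
  refine ⟨tau_single, tau_single_one, le_antisymm ?_ ?_, le_antisymm ?_ ?_⟩
  · exact limsup_le_of_le hlb.isCoboundedUnder_le (Eventually.of_forall tau_le_one)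
  · refine le_limsup_of_frequently_le ?_ hub
    exact tendsto_g1.frequently
      (((eventually_ge_atTop 1).mono fun m hm => (tau_single m hm).ge).frequently)
  · refine liminf_le_of_frequently_le ?_ hlb
    exact tendsto_g2.frequently
      ((Eventually.of_forall fun m => (tau_single_one m).le).frequently)
  · exact le_liminf_of_le hub.isCoboundedUnder_ge (Eventually.of_forall tau_nonneg)
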